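/- arXiv:1312.7645 — 7 statements merged into one kernel-verified Lean document; each statement's English description precedes it below -/
import Mathlib

section
/- An update can only increase the quality of a routing table: let rt be a routing table every entry of which has hop count (fifth component) at least 1 (a hypothesis guaranteed in all reachable protocol states), let dip ∈ kD(rt), and let r be an entry satisfying the preconditions π₄(r) = val, π₂(r) = 0 ⇔ π₃(r) = unk, and π₃(r) = unk ⇒ π₅(r) = 1. Then rt ⊑_dip update(rt,r). -/
open Classical

noncomputable section

inductive K where
  | kno
  | unk
  deriving DecidableEq

inductive F where
  | val
  | inv
  deriving DecidableEq

/-- A routing table entry: destination, destination sequence number,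
sequence-number-status flag, validity flag, hop count, next hop, precursors. -/
structure Entry (IP : Type) where
  dip : IP
  dsn : ℕ
  dsk : K
  flag : F
  hops : ℕ
  nhip : IP
  pre : Set IP

variable {IP : Type}

/-- At most one entry per destination. -/
def isRT (rt : Set (Entry IP)) : Prop :=
  ∀ r ∈ rt, ∀ s ∈ rt, r.dip = s.dip → r = s

def kD (rt : Set (Entry IP)) : Set IP := {d | ∃ r ∈ rt, r.dip = d}

def vD (rt : Set (Entry IP)) : Set IP := {d | ∃ r ∈ rt, r.dip = d ∧ r.flag = F.val}

def iD (rt : Set (Entry IP)) : Set IP := {d | ∃ r ∈ rt, r.dip = d ∧ r.flag = F.inv}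

/-- The entry of `rt` for destination `d`, when it exists. -/
def sigmaRoute (rt : Set (Entry IP)) (d : IP) : Option (Entry IP) :=
  if h : ∃ r ∈ rt, r.dip = d then some h.choose else none

def sqn (rt : Set (Entry IP)) (d : IP) : ℕ :=
  ((sigmaRoute rt d).map Entry.dsn).getD 0

def flagRT (rt : Set (Entry IP)) (d : IP) : Option F :=
  (sigmaRoute rt d).map Entry.flag

def dhops (rt : Set (Entry IP)) (d : IP) : ℕ :=
  ((sigmaRoute rt d).map Entry.hops).getD 0

/-- Net sequence number of an entry. -/
def nsqnE (r : Entry IP) : ℕ :=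
  if r.flag = F.val ∨ r.dsn = 0 then r.dsn else r.dsn - 1

def nsqn (rt : Set (Entry IP)) (d : IP) : ℕ :=
  ((sigmaRoute rt d).map nsqnE).getD 0

def inc (n : ℕ) : ℕ := if n = 0 then 0 else n + 1

/-- The quality preorder `rt ⊑_d rt'`. -/
def rtLe (d : IP) (rt rt' : Set (Entry IP)) : Prop :=
  nsqn rt d < nsqn rt' d ∨ (nsqn rt d = nsqn rt' d ∧ dhops rt d ≥ dhops rt' d)

/-- The quality equivalence `rt ≈_d rt'`. -/
def rtEquiv (d : IP) (rt rt' : Set (Entry IP)) : Prop :=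
  rtLe d rt rt' ∧ rtLe d rt' rt

/-- The strict quality order `rt ⊏_d rt'`. -/
def rtLt (d : IP) (rt rt' : Set (Entry IP)) : Prop :=
  rtLe d rt rt' ∧ ¬ rtEquiv d rt rt'

/-- Add precursors to an entry. -/
def addpre (r : Entry IP) (npre : Set IP) : Entry IP := { r with pre := r.pre ∪ npre }

/-- Preconditions of `update`. -/
def updPre (r : Entry IP) : Prop :=
  r.flag = F.val ∧ (r.dsn = 0 ↔ r.dsk = K.unk) ∧ (r.dsk = K.unk → r.hops = 1)

/-- The update function on routing tables. -/
def update (rt : Set (Entry IP)) (r : Entry IP) : Set (Entry IP) :=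
  if h : ∃ s ∈ rt, s.dip = r.dip then
    let s := h.choose
    let nrt := rt \ {s}
    let nr := addpre r s.pre
    let nr' := { nr with dsn := s.dsn }
    let ns := addpre s r.pre
    if sqn rt r.dip < r.dsn ∨ (sqn rt r.dip = r.dsn ∧ dhops rt r.dip > r.hops)
        ∨ (sqn rt r.dip = r.dsn ∧ flagRT rt r.dip = some F.inv) then
      nrt ∪ {nr}
    else if r.dsk = K.unk then nrt ∪ {nr'}
    else nrt ∪ {ns}
  else rt ∪ {r}

/-- `dests` is a partial function IP ⇀ ℕ. -/
def isPartialFn (dests : Set (IP × ℕ)) : Prop :=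
  ∀ p ∈ dests, ∀ q ∈ dests, p.1 = q.1 → p.2 = q.2

/-- The invalidate function on routing tables. -/
def invalidate (rt : Set (Entry IP)) (dests : Set (IP × ℕ)) : Set (Entry IP) :=
  (fun r => if h : ∃ rsn, (r.dip, rsn) ∈ dests then
      { r with dsn := h.choose, flag := F.inv } else r) '' rt

/-- Adding precursors to the entry for a given destination. -/
def addprecRT (rt : Set (Entry IP)) (d : IP) (npre : Set IP) : Set (Entry IP) :=
  if h : ∃ s ∈ rt, s.dip = d then (rt \ {h.choose}) ∪ {addpre h.choose npre} else rt

/-!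
Only the entry `s` for `r.dip` can change. When `r` replaces it (possibly keeping `s`'s sequence
number), `r` is valid, so its net sequence number is its sequence number, and this is at least
`nsqn s`. Ties in net sequence number go to `r` only if `r` has fewer hops or has an unknown
sequence number; in the latter case its hop count is 1, at most that of `s`.
-/

namespace Entry

def QualityLe (e e' : Entry IP) : Prop :=
  nsqnE e < nsqnE e' ∨ (nsqnE e = nsqnE e' ∧ e'.hops ≤ e.hops)

theorem QualityLe.refl (e : Entry IP) : e.QualityLe e := Or.inr ⟨rfl, le_rfl⟩

theorem qualityLe_of_lt {e e' : Entry IP} (h : nsqnE e < nsqnE e') : e.QualityLe e' := Or.inl h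

theorem qualityLe_of_le {e e' : Entry IP} (h : nsqnE e ≤ nsqnE e') (hhops : e'.hops ≤ e.hops) :
    e.QualityLe e' :=
  h.lt_or_eq.imp id fun heq => ⟨heq, hhops⟩

end Entry

theorem nsqnE_le (e : Entry IP) : nsqnE e ≤ e.dsn := by
  unfold nsqnE; split <;> omega

theorem nsqnE_of_val {e : Entry IP} (h : e.flag = F.val) : nsqnE e = e.dsn := by
  simp [nsqnE, h]

theorem sigmaRoute_congr {S T : Set (Entry IP)} {d : IP}
    (h : ∀ e : Entry IP, e.dip = d → (e ∈ S ↔ e ∈ T)) : sigmaRoute S d = sigmaRoute T d := by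
  have hST : (fun e : Entry IP => e ∈ S ∧ e.dip = d) = fun e => e ∈ T ∧ e.dip = d :=
    funext fun e => propext (and_congr_left (h e))
  unfold sigmaRoute
  simp only [hST]

theorem sigmaRoute_eq_some {S : Set (Entry IP)} {e : Entry IP} (he : e ∈ S)
    (huniq : ∀ f ∈ S, f.dip = e.dip → f = e) : sigmaRoute S e.dip = some e := by
  have hex : ∃ f ∈ S, f.dip = e.dip := ⟨e, he, rfl⟩
  rw [sigmaRoute, dif_pos hex]
  exact congrArg some (huniq _ hex.choose_spec.1 hex.choose_spec.2)

theorem isRT.sigmaRoute_eq {rt : Set (Entry IP)} (hrt : isRT rt) {e : Entry IP} (he : e ∈ rt) :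
    sigmaRoute rt e.dip = some e :=
  sigmaRoute_eq_some he fun f hf hfe => hrt f hf e he hfe

theorem isRT.sigmaRoute_replace {rt : Set (Entry IP)} (hrt : isRT rt) {s x : Entry IP}
    (hs : s ∈ rt) (hx : x.dip = s.dip) : sigmaRoute (rt \ {s} ∪ {x}) s.dip = some x := by
  rw [← hx]
  refine sigmaRoute_eq_some (Or.inr rfl) ?_
  rintro f (⟨hf, hfs⟩ | hfx) hfd
  · exact absurd (hrt f hf s hs (hfd.trans hx)) hfs
  · exact hfx

theorem rtLe_of_sigmaRoute {rt rt' : Set (Entry IP)} {d : IP} {e e' : Entry IP}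
    (h : sigmaRoute rt d = some e) (h' : sigmaRoute rt' d = some e') (hq : e.QualityLe e') :
    rtLe d rt rt' := by
  simpa [rtLe, nsqn, dhops, h, h', Entry.QualityLe] using hq

def updatedEntry (s r : Entry IP) : Entry IP :=
  if s.dsn < r.dsn ∨ (s.dsn = r.dsn ∧ s.hops > r.hops) ∨ (s.dsn = r.dsn ∧ s.flag = F.inv) then
    addpre r s.pre
  else if r.dsk = K.unk then { addpre r s.pre with dsn := s.dsn }
  else addpre s r.pre

theorem updatedEntry_dip {s r : Entry IP} (h : s.dip = r.dip) : (updatedEntry s r).dip = s.dip := by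
  unfold updatedEntry; split_ifs <;> simp [addpre, h]

theorem isRT.update_eq {rt : Set (Entry IP)} (hrt : isRT rt) {s r : Entry IP} (hs : s ∈ rt)
    (hsr : s.dip = r.dip) : update rt r = rt \ {s} ∪ {updatedEntry s r} := by
  have hex : ∃ s ∈ rt, s.dip = r.dip := ⟨s, hs, hsr⟩
  have hchoose : hex.choose = s := hrt _ hex.choose_spec.1 s hs (hex.choose_spec.2.trans hsr.symm)
  have hsig : sigmaRoute rt r.dip = some s := hsr ▸ hrt.sigmaRoute_eq hs
  simp only [update, dif_pos hex, hchoose, sqn, dhops, flagRT, hsig, updatedEntry,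
    Option.map_some, Option.getD_some, Option.some.injEq]
  split_ifs <;> rfl

theorem update_eq_union_of_notMem {rt : Set (Entry IP)} {r : Entry IP} (h : r.dip ∉ kD rt) :
    update rt r = rt ∪ {r} :=
  dif_neg h

theorem isRT.sigmaRoute_update_of_ne {rt : Set (Entry IP)} (hrt : isRT rt) {r : Entry IP} {d : IP}
    (hd : d ≠ r.dip) : sigmaRoute (update rt r) d = sigmaRoute rt d := by
  by_cases hk : r.dip ∈ kD rt
  · obtain ⟨s, hs, hsr⟩ := hk
    rw [hrt.update_eq hs hsr]
    refine sigmaRoute_congr fun e he => ?_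
    have hes : e ≠ s := fun h => hd (he ▸ h ▸ hsr)
    have heu : e ≠ updatedEntry s r := fun h => hd (he ▸ h ▸ (updatedEntry_dip hsr).trans hsr)
    simp [hes, heu]
  · rw [update_eq_union_of_notMem hk]
    refine sigmaRoute_congr fun e he => ?_
    have her : e ≠ r := fun h => hd (he ▸ h ▸ rfl)
    simp [her]

theorem qualityLe_updatedEntry {s r : Entry IP} (hr : updPre r) (hs : 1 ≤ s.hops) :
    s.QualityLe (updatedEntry s r) := by
  obtain ⟨hval, hzero, hunk⟩ := hr
  have hle := nsqnE_le s
  unfold updatedEntry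
  split_ifs with hnew hK
  · have hnr : nsqnE (addpre r s.pre) = r.dsn := nsqnE_of_val hval
    rcases hnew with hlt | ⟨heq, hhops⟩ | ⟨heq, hinv⟩
    · exact Entry.qualityLe_of_lt (by omega)
    · exact Entry.qualityLe_of_le (by omega) hhops.le
    · rcases Nat.eq_zero_or_pos s.dsn with h0 | h0
      · -- `nsqnE` does not decrement 0, and `r.dsn = 0` forces `r` to have hop count 1
        exact Entry.qualityLe_of_le (by omega) ((hunk (hzero.1 (heq ▸ h0))).trans_le hs)
      · have hdec : nsqnE s = s.dsn - 1 := by simp [nsqnE, hinv, h0.ne']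
        exact Entry.qualityLe_of_lt (by omega)
  · have hnr : nsqnE { addpre r s.pre with dsn := s.dsn } = s.dsn := nsqnE_of_val hval
    exact Entry.qualityLe_of_le (hle.trans_eq hnr.symm) ((hunk hK).trans_le hs)
  · exact Entry.QualityLe.refl s

/-- An update can only increase the quality of a routing table. -/
theorem update_quality_increase (IP : Type) (rt : Set (Entry IP)) (hrt : isRT rt)
    (hpos : ∀ e ∈ rt, 1 ≤ e.hops)
    (dip : IP) (hdip : dip ∈ kD rt)
    (r : Entry IP) (hr : updPre r) :
    rtLe dip rt (update rt r) := by
  obtain ⟨s, hs, rfl⟩ := hdip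
  have hsig := hrt.sigmaRoute_eq hs
  rcases eq_or_ne s.dip r.dip with hsr | hsr
  · refine rtLe_of_sigmaRoute hsig ?_ (qualityLe_updatedEntry hr (hpos s hs))
    rw [hrt.update_eq hs hsr]
    exact hrt.sigmaRoute_replace hs (updatedEntry_dip hsr)
  · exact rtLe_of_sigmaRoute hsig (hsig ▸ hrt.sigmaRoute_update_of_ne hsr) (Entry.QualityLe.refl s)

end
end

section
/- An invalidation with freshly incremented sequence numbers does not change the quality of a routing table: let rt be a routing table and dests a partial function IP ⇀ ℕ such that every (rip,rsn) ∈ dests satisfies rip ∈ vD(rt) and rsn = inc(sqn(rt,rip)). Then for every dip ∈ kD(rt), rt ≈_dip invalidate(rt,dests). -/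
open Classical

noncomputable section

variable {IP : Type}

lemma sigma_some {IP : Type} {rt : Set (Entry IP)} (hrt : isRT rt) {r : Entry IP} {d : IP}
    (hr : r ∈ rt) (hd : r.dip = d) : sigmaRoute rt d = some r := by
  have h : ∃ r ∈ rt, r.dip = d := ⟨r, hr, hd⟩
  unfold sigmaRoute
  rw [dif_pos h]
  exact congrArg some (hrt _ h.choose_spec.1 _ hr (by rw [h.choose_spec.2, hd]))

lemma invF_dip {IP : Type} (dests : Set (IP × ℕ)) (r : Entry IP) :
    ((fun r : Entry IP => if h : ∃ rsn, (r.dip, rsn) ∈ dests then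
      { r with dsn := h.choose, flag := F.inv } else r) r).dip = r.dip := by
  dsimp only; split <;> rfl

lemma inv_isRT {IP : Type} {rt : Set (Entry IP)} (hrt : isRT rt) (dests : Set (IP × ℕ)) :
    isRT (invalidate rt dests) := by
  rintro _ ⟨r, hr, rfl⟩ _ ⟨s, hs, rfl⟩ hdip
  rw [invF_dip, invF_dip] at hdip
  rw [hrt _ hr _ hs hdip]

/-- An invalidation with freshly incremented sequence numbers does not change the
quality of a routing table. -/
theorem invalidate_quality_equiv (IP : Type) (rt : Set (Entry IP)) (hrt : isRT rt)
    (dests : Set (IP × ℕ)) (hpf : isPartialFn dests)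
    (hdests : ∀ p ∈ dests, p.1 ∈ vD rt ∧ p.2 = inc (sqn rt p.1))
    (dip : IP) (hdip : dip ∈ kD rt) :
    rtEquiv dip rt (invalidate rt dests) := by
  obtain ⟨r, hr, hd⟩ := hdip
  set f : Entry IP → Entry IP := fun r => if h : ∃ rsn, (r.dip, rsn) ∈ dests then
      { r with dsn := h.choose, flag := F.inv } else r with hf
  have hσ : sigmaRoute rt dip = some r := sigma_some hrt hr hd
  have hσ' : sigmaRoute (invalidate rt dests) dip = some (f r) :=
    sigma_some (inv_isRT hrt dests) ⟨r, hr, rfl⟩ ((invF_dip dests r).trans hd)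
  have hhops : (f r).hops = r.hops := by rw [hf]; dsimp only; split <;> rfl
  have hnsqn : nsqnE (f r) = nsqnE r := by
    rw [hf]; dsimp only
    split
    · rename_i h
      have hspec := h.choose_spec
      have hval : r.flag = F.val := by
        obtain ⟨s, hs, hsd, hsv⟩ := (hdests _ hspec).1
        have hsd' : s.dip = r.dip := hsd
        rw [hrt _ hr _ hs hsd'.symm]; exact hsv
      have hsqn : sqn rt r.dip = r.dsn := by
        unfold sqn; rw [hd, hσ]; rfl
      have hc : h.choose = inc r.dsn := by
        have h2 := (hdests _ hspec).2
        simpa [hsqn] using h2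
      unfold nsqnE
      simp only [hc, hval]
      rcases Nat.eq_zero_or_pos r.dsn with h0 | h0
      · simp [h0, inc]
      · have : inc r.dsn = r.dsn + 1 := by unfold inc; rw [if_neg h0.ne']
        simp [this, h0.ne']
    · rfl
  have h1 : nsqn rt dip = nsqn (invalidate rt dests) dip := by
    unfold nsqn; rw [hσ, hσ']; simp [hnsqn]
  have h2 : dhops rt dip = dhops (invalidate rt dests) dip := by
    unfold dhops; rw [hσ, hσ']; simp [hhops]
  exact ⟨Or.inr ⟨h1, h2.ge⟩, Or.inr ⟨h1.symm, h2.le⟩⟩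

end
end

section
/- An update never decreases destination sequence numbers: for every routing table rt, every entry r satisfying the preconditions of update, and every destination dip ∈ IP, one has sqn(rt,dip) ≤ sqn(update(rt,r),dip). -/
open Classical

noncomputable section

variable {IP : Type}

lemma sigma_some_s8 {rt : Set (Entry IP)} {d : IP} {e : Entry IP} (he : e ∈ rt)
    (hd : e.dip = d) (hu : ∀ e' ∈ rt, e'.dip = d → e' = e) :
    sigmaRoute rt d = some e := by
  have h : ∃ r ∈ rt, r.dip = d := ⟨e, he, hd⟩
  rw [sigmaRoute, dif_pos h]
  exact congrArg some (hu h.choose h.choose_spec.1 h.choose_spec.2)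

lemma sigma_none {rt : Set (Entry IP)} {d : IP} (h : ¬∃ r ∈ rt, r.dip = d) :
    sigmaRoute rt d = none := by
  rw [sigmaRoute, dif_neg h]

lemma sqn_eq_of_mem {rt : Set (Entry IP)} (hrt : isRT rt) {d : IP} {e : Entry IP}
    (he : e ∈ rt) (hd : e.dip = d) : sqn rt d = e.dsn := by
  rw [sqn, sigma_some_s8 he hd (fun e' he' hd' => hrt e' he' e he (hd'.trans hd.symm))]
  rfl

lemma sqn_union_single {rt : Set (Entry IP)} (hrt : isRT rt) {s x : Entry IP}
    (hs : s ∈ rt) (hsd : s.dip = x.dip) :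
    sqn ((rt \ {s}) ∪ {x}) x.dip = x.dsn := by
  have hu : ∀ e' ∈ (rt \ {s}) ∪ {x}, e'.dip = x.dip → e' = x := by
    rintro e' (⟨he', hne⟩ | he') hd'
    · exact absurd (hrt e' he' s hs (hd'.trans hsd.symm)) hne
    · exact he'
  rw [sqn, sigma_some_s8 (Or.inr rfl) rfl hu]
  rfl

lemma sqn_union_other {rt : Set (Entry IP)} (hrt : isRT rt) {s x : Entry IP}
    (hs : s ∈ rt) {d : IP} (hx : x.dip ≠ d) (hsd : s.dip ≠ d) :
    sqn ((rt \ {s}) ∪ {x}) d = sqn rt d := by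
  by_cases h : ∃ e ∈ rt, e.dip = d
  · obtain ⟨e, he, hed⟩ := h
    have hes : e ≠ s := fun heq => hsd (heq ▸ hed)
    have hu : ∀ e' ∈ (rt \ {s}) ∪ {x}, e'.dip = d → e' = e := by
      rintro e' (⟨he', _⟩ | he') hd'
      · exact hrt e' he' e he (hd'.trans hed.symm)
      · exact absurd (he' ▸ hd') hx
    rw [sqn, sigma_some_s8 (Or.inl ⟨he, hes⟩) hed hu, sqn_eq_of_mem hrt he hed]
    rfl
  · have h' : ¬∃ e ∈ (rt \ {s}) ∪ {x}, e.dip = d := by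
      rintro ⟨e, (⟨he, _⟩ | he), hed⟩
      · exact h ⟨e, he, hed⟩
      · exact hx (he ▸ hed)
    rw [sqn, sigma_none h', sqn, sigma_none h]

/-- An update never decreases destination sequence numbers. -/
theorem update_sqn_mono (IP : Type) (rt : Set (Entry IP)) (hrt : isRT rt)
    (r : Entry IP) (hr : updPre r) (dip : IP) :
    sqn rt dip ≤ sqn (update rt r) dip := by
  by_cases h : ∃ s ∈ rt, s.dip = r.dip
  · have hs1 : h.choose ∈ rt := h.choose_spec.1
    have hs2 : h.choose.dip = r.dip := h.choose_spec.2
    simp only [update, dif_pos h]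
    by_cases hd : dip = r.dip
    · subst hd
      have hsqn : sqn rt r.dip = h.choose.dsn := sqn_eq_of_mem hrt hs1 hs2
      split_ifs with c1 c2
      · have : sqn ((rt \ {h.choose}) ∪ {addpre r h.choose.pre}) r.dip = r.dsn := by
          have := sqn_union_single hrt hs1 (s := h.choose) (x := addpre r h.choose.pre)
            (by simpa [addpre] using hs2)
          simpa [addpre] using this
        rw [this, hsqn]
        rcases c1 with hlt | ⟨heq, _⟩ | ⟨heq, _⟩
        · exact le_of_lt (hsqn ▸ hlt)
        · exact le_of_eq (hsqn ▸ heq)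
        · exact le_of_eq (hsqn ▸ heq)
      · have : sqn ((rt \ {h.choose}) ∪ {{ addpre r h.choose.pre with dsn := h.choose.dsn }}) r.dip
            = h.choose.dsn := by
          have := sqn_union_single hrt hs1
            (s := h.choose) (x := { addpre r h.choose.pre with dsn := h.choose.dsn })
            (by simpa [addpre] using hs2)
          simpa [addpre] using this
        rw [this, hsqn]
      · have : sqn ((rt \ {h.choose}) ∪ {addpre h.choose r.pre}) r.dip = h.choose.dsn := by
          have := sqn_union_single hrt hs1 (s := h.choose) (x := addpre h.choose r.pre)
            (by simp [addpre])
          simpa [addpre, hs2] using this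
        rw [this, hsqn]
    · have hsd : h.choose.dip ≠ dip := fun he => hd (hs2.symm.trans he).symm
      split_ifs with c1 c2 <;>
        rw [sqn_union_other hrt hs1 (by simp [addpre, hs2]; exact fun he => hd he.symm) hsd]
  · rw [update, dif_neg h]
    by_cases hd : dip = r.dip
    · subst hd
      have : sqn rt r.dip = 0 := by rw [sqn, sigma_none (by simpa using h)]; rfl
      rw [this]; exact Nat.zero_le _
    · by_cases h2 : ∃ e ∈ rt, e.dip = dip
      · obtain ⟨e, he, hed⟩ := h2
        have hu : ∀ e' ∈ rt ∪ {r}, e'.dip = dip → e' = e := by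
          rintro e' (he' | he') hd'
          · exact hrt e' he' e he (hd'.trans hed.symm)
          · exact absurd (he' ▸ hd') (fun hx => hd hx.symm)
        rw [sqn_eq_of_mem hrt he hed, sqn, sigma_some_s8 (Or.inl he) hed hu]
        rfl
      · have h2' : ¬∃ e ∈ rt ∪ {r}, e.dip = dip := by
          rintro ⟨e, (he | he), hed⟩
          · exact h2 ⟨e, he, hed⟩
          · exact hd (he ▸ hed).symm
        simp [sqn, sigma_none h2', sigma_none h2]

end
end

section
/- An update preserves the invariant that zero sequence numbers are flagged as unknown: if every entry of the routing table rt whose second component is 0 has sequence-number-status flag unk, and r is an entry satisfying the preconditions of update, then every entry of update(rt,r) whose second component is 0 has sequence-number-status flag unk. -/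
open Classical

noncomputable section

variable {IP : Type}

/-- An update preserves the invariant that zero sequence numbers are flagged as unknown. -/
theorem update_preserves_zero_unk (IP : Type) (rt : Set (Entry IP)) (hrt : isRT rt)
    (hinv : ∀ e ∈ rt, e.dsn = 0 → e.dsk = K.unk)
    (r : Entry IP) (hr : updPre r) :
    ∀ e ∈ update rt r, e.dsn = 0 → e.dsk = K.unk := by
  intro e he h0
  unfold update at he
  split at he
  case isTrue h =>
    have hs : h.choose ∈ rt := h.choose_spec.1
    split at he
    · rcases he with he | he
      · exact hinv e he.1 h0
      · simp only [Set.mem_singleton_iff] at he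
        subst he
        exact hr.2.1.mp h0
    · split at he
      case isTrue hk =>
        rcases he with he | he
        · exact hinv e he.1 h0
        · simp only [Set.mem_singleton_iff] at he
          subst he
          exact hk
      case isFalse =>
        rcases he with he | he
        · exact hinv e he.1 h0
        · simp only [Set.mem_singleton_iff] at he
          subst he
          exact hinv h.choose hs h0
  case isFalse =>
    rcases he with he | he
    · exact hinv e he h0
    · simp only [Set.mem_singleton_iff] at he
      subst he
      exact hr.2.1.mp h0

end
end

section
/- An invalidation with strictly larger sequence numbers never decreases the quality of a routing table: let rt be a routing table and dests a partial function IP ⇀ ℕ such that every (rip,rsn) ∈ dests satisfies rip ∈ vD(rt) and sqn(rt,rip) < rsn. Then for every dip ∈ kD(rt), rt ⊑_dip invalidate(rt,dests). -/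
open Classical

noncomputable section

variable {IP : Type}

lemma sigma_eq_of_mem {IP : Type} (rt : Set (Entry IP)) (hrt : isRT rt) (d : IP)
    (r : Entry IP) (hr : r ∈ rt) (hd : r.dip = d) : sigmaRoute rt d = some r := by
  have h : ∃ s ∈ rt, s.dip = d := ⟨r, hr, hd⟩
  unfold sigmaRoute
  rw [dif_pos h]
  obtain ⟨hm, hdd⟩ := h.choose_spec
  exact congrArg some (hrt _ hm _ hr (hdd.trans hd.symm))

lemma invalidate_isRT {IP : Type} (rt : Set (Entry IP)) (hrt : isRT rt)
    (dests : Set (IP × ℕ)) : isRT (invalidate rt dests) := by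
  rintro a ⟨s, hs, rfl⟩ b ⟨t, ht, rfl⟩ hab
  have hdip : ∀ u : Entry IP,
      ((if h : ∃ rsn, (u.dip, rsn) ∈ dests then
        { u with dsn := h.choose, flag := F.inv } else u) : Entry IP).dip = u.dip := by
    intro u; split <;> rfl
  rw [hdip s, hdip t] at hab
  rw [hrt _ hs _ ht hab]

/-- An invalidation with strictly larger sequence numbers never decreases the quality
of a routing table. -/
theorem invalidate_quality_mono (IP : Type) (rt : Set (Entry IP)) (hrt : isRT rt)
    (dests : Set (IP × ℕ)) (hpf : isPartialFn dests)
    (hdests : ∀ p ∈ dests, p.1 ∈ vD rt ∧ sqn rt p.1 < p.2)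
    (dip : IP) (hdip : dip ∈ kD rt) :
    rtLe dip rt (invalidate rt dests) := by
  obtain ⟨r, hr, hrd⟩ := hdip
  have hσ : sigmaRoute rt dip = some r := sigma_eq_of_mem rt hrt dip r hr hrd
  set f : Entry IP → Entry IP := fun u =>
    if h : ∃ rsn, (u.dip, rsn) ∈ dests then
      { u with dsn := h.choose, flag := F.inv } else u with hf
  have hfmem : f r ∈ invalidate rt dests := ⟨r, hr, rfl⟩
  have hfdip : (f r).dip = dip := by
    simp only [hf]; split <;> simpa
  have hσ' : sigmaRoute (invalidate rt dests) dip = some (f r) :=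
    sigma_eq_of_mem _ (invalidate_isRT rt hrt dests) dip (f r) hfmem hfdip
  by_cases hc : ∃ rsn, (r.dip, rsn) ∈ dests
  · have hspec := hc.choose_spec
    have hd := hdests _ hspec
    -- r.flag = F.val
    obtain ⟨s, hs, hsd, hsval⟩ := hd.1
    have hsr : s = r := hrt _ hs _ hr hsd
    have hval : r.flag = F.val := hsr ▸ hsval
    have hsqn : sqn rt r.dip = r.dsn := by
      simp [sqn, hrd ▸ hσ]
    have hlt : r.dsn < hc.choose := hsqn ▸ hd.2
    have hfr : f r = { r with dsn := hc.choose, flag := F.inv } := dif_pos hc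
    have h1 : nsqn rt dip = r.dsn := by
      simp [nsqn, hσ, nsqnE, hval]
    have h2 : nsqn (invalidate rt dests) dip = hc.choose - 1 := by
      have : hc.choose ≠ 0 := by omega
      simp [nsqn, hσ', hfr, nsqnE, this]
    have h3 : dhops rt dip = dhops (invalidate rt dests) dip := by
      simp [dhops, hσ, hσ', hfr]
    rcases lt_or_eq_of_le (by omega : r.dsn ≤ hc.choose - 1) with h | h
    · exact Or.inl (by omega)
    · exact Or.inr ⟨by omega, le_of_eq h3.symm⟩
  · have hfr : f r = r := dif_neg hc
    exact Or.inr ⟨by simp [nsqn, hσ, hσ', hfr], by simp [dhops, hσ, hσ', hfr]⟩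

end
end

section
/- The modified invalidation of Resolution (8d) never decreases sequence numbers or quality: for every routing table rt, every partial function dests : IP ⇀ ℕ and every destination dip ∈ IP, one has sqn(rt,dip) ≤ sqn(invalidate'(rt,dests),dip); moreover rt ⊑_dip invalidate'(rt,dests) for every dip ∈ kD(rt). -/
open Classical

noncomputable section

variable {IP : Type}

/-- The modified invalidation function of Resolution (8d): the new sequence number of an
invalidated entry is the maximum of the incremented stored one and the incoming one. -/
def invalidate' (rt : Set (Entry IP)) (dests : Set (IP × ℕ)) : Set (Entry IP) :=
  (fun r => if h : ∃ rsn, (r.dip, rsn) ∈ dests then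
      { r with dsn := max (inc r.dsn) h.choose, flag := F.inv } else r) '' rt

/-- The modified invalidation of Resolution (8d) never decreases sequence numbers
or quality. -/
theorem invalidate'_mono (IP : Type) (rt : Set (Entry IP)) (hrt : isRT rt)
    (dests : Set (IP × ℕ)) (hpf : isPartialFn dests) :
    (∀ dip : IP, sqn rt dip ≤ sqn (invalidate' rt dests) dip) ∧
    (∀ dip ∈ kD rt, rtLe dip rt (invalidate' rt dests)) := by
  classical
  set f : Entry IP → Entry IP := fun r =>
    if h : ∃ rsn, (r.dip, rsn) ∈ dests then
      { r with dsn := max (inc r.dsn) h.choose, flag := F.inv } else r with hf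
  have hinv : invalidate' rt dests = f '' rt := rfl
  have hdip : ∀ r : Entry IP, (f r).dip = r.dip := by
    intro r; simp only [hf]; split <;> rfl
  have hdsn : ∀ r : Entry IP, r.dsn ≤ (f r).dsn := by
    intro r; simp only [hf]; split
    · refine le_trans ?_ (le_max_left _ _)
      unfold inc; split <;> omega
    · exact le_rfl
  have hhops : ∀ r : Entry IP, (f r).hops = r.hops := by
    intro r; simp only [hf]; split <;> rfl
  have hnsqn : ∀ r : Entry IP, nsqnE r ≤ nsqnE (f r) := by
    intro r
    have h1 : nsqnE r ≤ r.dsn := by unfold nsqnE; split <;> omega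
    simp only [hf]; split
    · rename_i h
      show nsqnE r ≤ nsqnE { r with dsn := max (inc r.dsn) h.choose, flag := F.inv }
      have h2 : nsqnE { r with dsn := max (inc r.dsn) h.choose, flag := F.inv }
          = if max (inc r.dsn) h.choose = 0 then max (inc r.dsn) h.choose
            else max (inc r.dsn) h.choose - 1 := by
        unfold nsqnE
        simp only [show ¬((F.inv : F) = F.val) from by simp, false_or]
      rcases Nat.eq_zero_or_pos r.dsn with h0 | h0
      · have : nsqnE r = 0 := by unfold nsqnE; simp [h0]
        rw [h2]; split <;> omega
      · have hinc : inc r.dsn = r.dsn + 1 := by unfold inc; split <;> omega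
        have hm : r.dsn + 1 ≤ max (inc r.dsn) h.choose := by
          rw [hinc]; exact le_max_left _ _
        rw [h2]
        set m := max (inc r.dsn) h.choose with hmm
        split <;> omega
    · exact le_rfl
  have hsig : ∀ d : IP, sigmaRoute (invalidate' rt dests) d = (sigmaRoute rt d).map f := by
    intro d
    rw [hinv]
    by_cases h : ∃ r ∈ rt, r.dip = d
    · have h' : ∃ s ∈ f '' rt, s.dip = d := by
        obtain ⟨r, hr, hrd⟩ := h
        exact ⟨f r, Set.mem_image_of_mem f hr, by rw [hdip, hrd]⟩
      rw [sigmaRoute, sigmaRoute, dif_pos h, dif_pos h']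
      obtain ⟨hs0, hs0d⟩ := h'.choose_spec
      obtain ⟨r', hr', hr'e⟩ := hs0
      have hr'd : r'.dip = d := by rw [← hdip r', hr'e, hs0d]
      have hch : h.choose = r' :=
        hrt _ h.choose_spec.1 _ hr' (h.choose_spec.2.trans hr'd.symm)
      simp [hch, hr'e]
    · have h' : ¬ ∃ s ∈ f '' rt, s.dip = d := by
        rintro ⟨s, ⟨r, hr, rfl⟩, hsd⟩
        exact h ⟨r, hr, by rw [← hdip r]; exact hsd⟩
      rw [sigmaRoute, sigmaRoute, dif_neg h, dif_neg h']
      rfl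
  constructor
  · intro d
    rw [sqn, sqn, hsig d]
    cases hs : sigmaRoute rt d with
    | none => simp [hs]
    | some r => simpa using hdsn r
  · intro d hd
    obtain ⟨r0, hr0, hr0d⟩ := hd
    have hex : ∃ r ∈ rt, r.dip = d := ⟨r0, hr0, hr0d⟩
    have hsr : sigmaRoute rt d = some hex.choose := by rw [sigmaRoute, dif_pos hex]
    set r := hex.choose with hr
    have hnle : nsqn rt d ≤ nsqn (invalidate' rt dests) d := by
      rw [nsqn, nsqn, hsig d, hsr]; simpa using hnsqn r
    have hdh : dhops (invalidate' rt dests) d = dhops rt d := by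
      rw [dhops, dhops, hsig d, hsr]; simpa using hhops r
    rcases lt_or_eq_of_le hnle with h | h
    · exact Or.inl h
    · exact Or.inr ⟨h, le_of_eq hdh⟩

end
end

section
/- The modified update of Resolution (2e) never decreases net sequence numbers: for every routing table rt, every entry r satisfying the preconditions of update₂ₑ, and every destination dip ∈ IP, one has nsqn(rt,dip) ≤ nsqn(update₂ₑ(rt,r),dip). -/
open Classical

noncomputable section

variable {IP : Type}

/-- The modified update function of Resolution (2e). -/
def update2e (rt : Set (Entry IP)) (r : Entry IP) : Set (Entry IP) :=
  if h : ∃ s ∈ rt, s.dip = r.dip then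
    let s := h.choose
    let nrt := rt \ {s}
    let nr := addpre r s.pre
    let nr2 := { nr with dsn := s.dsn, dsk := s.dsk }
    let nr3 := { nr with dsn := s.dsn - 1, dsk := s.dsk }
    let ns := addpre s r.pre
    if sqn rt r.dip < r.dsn
        ∨ (sqn rt r.dip = r.dsn ∧ dhops rt r.dip > r.hops ∧ r.dsk = K.kno)
        ∨ (sqn rt r.dip = r.dsn ∧ flagRT rt r.dip = some F.inv ∧ r.dsk = K.kno) then
      nrt ∪ {nr}
    else if r.dsk = K.unk ∧ flagRT rt r.dip = some F.val then nrt ∪ {nr2}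
    else if r.dsk = K.unk ∧ flagRT rt r.dip = some F.inv then nrt ∪ {nr3}
    else nrt ∪ {ns}
  else rt ∪ {r}

/-!
`update2e` either adds an entry for a new destination or replaces the entry `s` for `r.dip`
by a single new entry, so it suffices that the new entry's net sequence number is at least
`nsqnE s`. Since `r` is valid, this holds in every branch: the fresh entry carries
`r.dsn ≥ s.dsn ≥ nsqnE s`; the entry with `s.dsn` is valid; the entry with `s.dsn ∸ 1`
replaces an invalid `s`, whose net sequence number is exactly `s.dsn ∸ 1`; and adding
precursors leaves `s` unchanged otherwise.
-/

namespace Entry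

theorem nsqnE_le_dsn (e : Entry IP) : nsqnE e ≤ e.dsn := by
  unfold nsqnE; split <;> omega

theorem nsqnE_of_flag_val {e : Entry IP} (h : e.flag = F.val) : nsqnE e = e.dsn := by
  simp [nsqnE, h]

theorem nsqnE_of_flag_inv {e : Entry IP} (h : e.flag = F.inv) : nsqnE e = e.dsn - 1 := by
  unfold nsqnE; split_ifs with hc <;> simp_all

theorem nsqnE_addpre (e : Entry IP) (npre : Set IP) : nsqnE (addpre e npre) = nsqnE e := rfl

end Entry

theorem isRT.mono {rt rt' : Set (Entry IP)} (h : isRT rt) (hsub : rt' ⊆ rt) : isRT rt' :=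
  fun a ha b hb => h a (hsub ha) b (hsub hb)

theorem isRT.union_singleton {rt : Set (Entry IP)} (h : isRT rt) {x : Entry IP}
    (hx : ∀ u ∈ rt, u.dip ≠ x.dip) : isRT (rt ∪ {x}) := by
  rintro a (ha | rfl) b (hb | rfl) hab
  · exact h a ha b hb hab
  · exact absurd hab (hx a ha)
  · exact absurd hab.symm (hx b hb)
  · rfl

theorem isRT.replace {rt : Set (Entry IP)} (h : isRT rt) {s x : Entry IP} (hs : s ∈ rt)
    (hx : x.dip = s.dip) : isRT (rt \ {s} ∪ {x}) :=
  (h.mono Set.sdiff_subset).union_singleton fun u ⟨hu, hus⟩ hux =>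
    hus (h u hu s hs (hux.trans hx))

theorem sigmaRoute_of_mem {rt : Set (Entry IP)} (hrt : isRT rt) {s : Entry IP} (hs : s ∈ rt) :
    sigmaRoute rt s.dip = some s := by
  have h : ∃ t ∈ rt, t.dip = s.dip := ⟨s, hs, rfl⟩
  rw [sigmaRoute, dif_pos h]
  exact congrArg some (hrt _ h.choose_spec.1 _ hs h.choose_spec.2)

theorem nsqn_of_mem {rt : Set (Entry IP)} (hrt : isRT rt) {s : Entry IP} (hs : s ∈ rt) :
    nsqn rt s.dip = nsqnE s := by
  simp [nsqn, sigmaRoute_of_mem hrt hs]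

theorem nsqn_of_forall_ne {rt : Set (Entry IP)} {d : IP} (h : ∀ u ∈ rt, u.dip ≠ d) :
    nsqn rt d = 0 := by
  have : ¬ ∃ u ∈ rt, u.dip = d := fun ⟨u, hu, hud⟩ => h u hu hud
  simp [nsqn, sigmaRoute, this]

theorem nsqn_le_nsqn_of_forall {rt rt' : Set (Entry IP)} (hrt : isRT rt) (hrt' : isRT rt')
    (h : ∀ u ∈ rt, ∃ v ∈ rt', v.dip = u.dip ∧ nsqnE u ≤ nsqnE v) (d : IP) :
    nsqn rt d ≤ nsqn rt' d := by
  by_cases hd : ∃ u ∈ rt, u.dip = d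
  · obtain ⟨u, hu, rfl⟩ := hd
    obtain ⟨v, hv, hvu, huv⟩ := h u hu
    rw [nsqn_of_mem hrt hu, ← hvu, nsqn_of_mem hrt' hv]
    exact huv
  · rw [nsqn_of_forall_ne fun u hu hud => hd ⟨u, hu, hud⟩]
    exact Nat.zero_le _

theorem nsqn_le_nsqn_union_singleton {rt : Set (Entry IP)} (hrt : isRT rt) {x : Entry IP}
    (hx : ∀ u ∈ rt, u.dip ≠ x.dip) (d : IP) : nsqn rt d ≤ nsqn (rt ∪ {x}) d :=
  nsqn_le_nsqn_of_forall hrt (hrt.union_singleton hx)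
    (fun u hu => ⟨u, Or.inl hu, rfl, le_rfl⟩) d

theorem nsqn_le_nsqn_replace {rt : Set (Entry IP)} (hrt : isRT rt) {s x : Entry IP}
    (hs : s ∈ rt) (hx : x.dip = s.dip) (hsx : nsqnE s ≤ nsqnE x) (d : IP) :
    nsqn rt d ≤ nsqn (rt \ {s} ∪ {x}) d := by
  refine nsqn_le_nsqn_of_forall hrt (hrt.replace hs hx) (fun u hu => ?_) d
  by_cases hus : u = s
  · exact ⟨x, Or.inr rfl, hus ▸ hx, hus ▸ hsx⟩
  · exact ⟨u, Or.inl ⟨hu, hus⟩, rfl, le_rfl⟩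

theorem exists_update2e_eq_replace {rt : Set (Entry IP)} (hrt : isRT rt) {r s : Entry IP}
    (hr : r.flag = F.val) (hs : s ∈ rt) (hsr : s.dip = r.dip) :
    ∃ x : Entry IP, update2e rt r = rt \ {s} ∪ {x} ∧ x.dip = s.dip ∧ nsqnE s ≤ nsqnE x := by
  have h : ∃ t ∈ rt, t.dip = r.dip := ⟨s, hs, hsr⟩
  have hchoose : h.choose = s := hrt _ h.choose_spec.1 _ hs (h.choose_spec.2.trans hsr.symm)
  have hsig : sigmaRoute rt r.dip = some s := hsr ▸ sigmaRoute_of_mem hrt hs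
  have hsqn : sqn rt r.dip = s.dsn := by simp [sqn, hsig]
  have hflag : flagRT rt r.dip = some s.flag := by simp [flagRT, hsig]
  rw [update2e, dif_pos h, hchoose, hsqn, hflag]
  dsimp only
  split_ifs with hnew _ hinv
  · refine ⟨_, rfl, hsr.symm, ?_⟩
    have hle : s.dsn ≤ r.dsn := by rcases hnew with hlt | ⟨heq, -⟩ | ⟨heq, -⟩ <;> omega
    rw [Entry.nsqnE_addpre, Entry.nsqnE_of_flag_val hr]
    exact (Entry.nsqnE_le_dsn s).trans hle
  · refine ⟨_, rfl, hsr.symm, ?_⟩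
    rw [Entry.nsqnE_of_flag_val (e := { addpre r s.pre with dsn := s.dsn, dsk := s.dsk }) hr]
    exact Entry.nsqnE_le_dsn s
  · refine ⟨_, rfl, hsr.symm, le_of_eq ?_⟩
    rw [Entry.nsqnE_of_flag_val (e := { addpre r s.pre with dsn := s.dsn - 1, dsk := s.dsk }) hr]
    exact Entry.nsqnE_of_flag_inv (Option.some_injective _ hinv.2)
  · exact ⟨_, rfl, rfl, (Entry.nsqnE_addpre s r.pre).ge⟩

/-- The modified update of Resolution (2e) never decreases net sequence numbers. -/
theorem update2e_nsqn_mono (IP : Type) (rt : Set (Entry IP)) (hrt : isRT rt)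
    (r : Entry IP) (hr : updPre r) (dip : IP) :
    nsqn rt dip ≤ nsqn (update2e rt r) dip := by
  by_cases h : ∃ s ∈ rt, s.dip = r.dip
  · obtain ⟨s, hs, hsr⟩ := h
    obtain ⟨x, hupd, hx, hsx⟩ := exists_update2e_eq_replace hrt hr.1 hs hsr
    rw [hupd]
    exact nsqn_le_nsqn_replace hrt hs hx hsx dip
  · rw [update2e, dif_neg h]
    exact nsqn_le_nsqn_union_singleton hrt (fun u hu hur => h ⟨u, hu, hur⟩) dip

end
end
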